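/- Define θ : Aⁿ → A by θ(v) = Σ_{j=1}^n [X_j, v_j] (with [x,y] = xy − yx) and C : A → A by C(a) = Σ_{k=1}^n X_k·δ_k(a). Then the range of θ is contained in the kernel of C, i.e. for every v = (v₁,…,vₙ) ∈ Aⁿ one has C(Σ_{j=1}^n [X_j, v_j]) = 0; moreover τ(Σ_{j=1}^n [X_j, v_j]) = 0 for every tracial functional τ on A. -/
import Mathlib


open scoped TensorProduct

noncomputable section

/-- The free algebra `A = ℂ⟨X₁,…,Xₙ⟩` on `n` generators. -/
abbrev FA (n : ℕ) := FreeAlgebra ℂ (Fin n)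

/-- The generator `X i`. -/
def X {n : ℕ} (i : Fin n) : FA n := FreeAlgebra.ι ℂ i

/-- The monomial `X_{i₁} ⋯ X_{i_m}` associated to a list of indices. -/
def mono {n : ℕ} (l : List (Fin n)) : FA n := (l.map X).prod

lemma mono_nil {n : ℕ} : mono (n := n) [] = 1 := rfl

lemma mono_cons {n : ℕ} (a : Fin n) (l : List (Fin n)) : mono (a :: l) = X a * mono l := by
  simp [mono]

lemma mono_append {n : ℕ} (l₁ l₂ : List (Fin n)) : mono (l₁ ++ l₂) = mono l₁ * mono l₂ := by
  simp [mono]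

/-- Monomials span the free algebra. -/
lemma span_mono {n : ℕ} (a : FA n) : a ∈ Submodule.span ℂ (Set.range (mono (n := n))) := by
  set S := Submodule.span ℂ (Set.range (mono (n := n))) with hS
  have hm : ∀ l, mono (n := n) l ∈ S := fun l => Submodule.subset_span ⟨l, rfl⟩
  induction a using FreeAlgebra.induction with
  | grade0 r =>
      have : (algebraMap ℂ (FA n)) r = r • mono [] := by
        simp [mono_nil, Algebra.algebraMap_eq_smul_one]
      rw [this]; exact S.smul_mem r (hm [])
  | grade1 i =>
      have : FreeAlgebra.ι ℂ i = mono [i] := by simp [mono, X]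
      rw [this]; exact hm [i]
  | add a b ha hb => exact S.add_mem ha hb
  | mul a b ha hb =>
      induction ha using Submodule.span_induction with
      | mem x hx =>
          obtain ⟨l₁, rfl⟩ := hx
          induction hb using Submodule.span_induction with
          | mem y hy => obtain ⟨l₂, rfl⟩ := hy; rw [← mono_append]; exact hm _
          | zero => simp only [mul_zero]; exact S.zero_mem
          | add y z _ _ hy hz => rw [mul_add]; exact S.add_mem hy hz
          | smul c y _ hy => rw [mul_smul_comm]; exact S.smul_mem c hy
      | zero => simp only [zero_mul]; exact S.zero_mem
      | add x y _ _ hx hy => rw [add_mul]; exact S.add_mem hx hy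
      | smul c x _ hx => rw [smul_mul_assoc]; exact S.smul_mem c hx

/-- The cyclic derivative kills commutators with generators, on monomials. -/
lemma delta_comm_mono {n : ℕ} (δ : Fin n → (FA n →ₗ[ℂ] FA n))
    (hδ : ∀ (j : Fin n) (l : List (Fin n)),
      δ j (mono l) = ∑ k : Fin l.length,
        if l.get k = j then mono (l.drop (k.val + 1)) * mono (l.take k.val) else 0)
    (k j : Fin n) (l : List (Fin n)) :
    δ k (X j * mono l - mono l * X j) = 0 := by
  have h1 : X j * mono l = mono (j :: l) := (mono_cons j l).symm
  have h2 : mono l * X j = mono (l ++ [j]) := by simp [mono_append, mono]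
  rw [h1, h2, map_sub, hδ, hδ, sub_eq_zero]
  have hlen : l.length + 1 = (l ++ [j]).length := by simp
  rw [← Fin.sum_congr' _ hlen]
  simp only [List.length_cons]
  rw [Fin.sum_univ_succ, Fin.sum_univ_castSucc, add_comm]
  simp only [List.get_eq_getElem, Fin.coe_cast, Fin.coe_castSucc, Fin.val_succ, Fin.val_zero,
    Fin.val_last]
  congr 1
  · apply Finset.sum_congr rfl
    intro i _
    have hi : (i : ℕ) < l.length := i.isLt
    simp [List.getElem_append_left, hi, List.drop_append_of_le_length,
      List.take_append_of_le_length, Nat.succ_le_of_lt hi, le_of_lt hi, mono_cons, mono_append,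
      mono_nil, mul_assoc]
  · simp [List.getElem_append_right, List.take_append_of_le_length, mono_nil]

/-- The cyclic derivative kills commutators with generators. -/
lemma delta_comm {n : ℕ} (δ : Fin n → (FA n →ₗ[ℂ] FA n))
    (hδ : ∀ (j : Fin n) (l : List (Fin n)),
      δ j (mono l) = ∑ k : Fin l.length,
        if l.get k = j then mono (l.drop (k.val + 1)) * mono (l.take k.val) else 0)
    (k j : Fin n) (a : FA n) :
    δ k (X j * a - a * X j) = 0 := by
  set L : FA n →ₗ[ℂ] FA n :=
    (δ k).comp (LinearMap.mulLeft ℂ (X j) - LinearMap.mulRight ℂ (X j)) with hL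
  have hLa : ∀ b : FA n, L b = δ k (X j * b - b * X j) := fun b => rfl
  have hker : a ∈ LinearMap.ker L := by
    have : Submodule.span ℂ (Set.range (mono (n := n))) ≤ LinearMap.ker L := by
      rw [Submodule.span_le]
      rintro x ⟨l, rfl⟩
      simp only [SetLike.mem_coe, LinearMap.mem_ker, hLa]
      exact delta_comm_mono δ hδ k j l
    exact this (span_mono a)
  rw [← hLa]
  exact hker

/-- the range of `θ(v) = Σ_j [X_j, v_j]` is contained in the kernel of
`C(a) = Σ_k X_k·δ_k(a)`, and `τ(θ(v)) = 0` for every tracial functional `τ`. -/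
theorem stmt16 {n : ℕ} (hn : 1 ≤ n)
    (δ : Fin n → (FA n →ₗ[ℂ] FA n))
    (hδ : ∀ (j : Fin n) (l : List (Fin n)),
      δ j (mono l) = ∑ k : Fin l.length,
        if l.get k = j then mono (l.drop (k.val + 1)) * mono (l.take k.val) else 0)
    (v : Fin n → FA n) :
    (∑ k : Fin n, X k * δ k (∑ j : Fin n, (X j * v j - v j * X j)) = 0) ∧
    (∀ τ : FA n →ₗ[ℂ] ℂ, (∀ P Q : FA n, τ (P * Q) = τ (Q * P)) →
      τ (∑ j : Fin n, (X j * v j - v j * X j)) = 0) := by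
  constructor
  · have hz : ∀ k : Fin n, δ k (∑ j : Fin n, (X j * v j - v j * X j)) = 0 := by
      intro k
      rw [map_sum]
      exact Finset.sum_eq_zero fun j _ => delta_comm δ hδ k j (v j)
    simp only [hz, mul_zero, Finset.sum_const_zero]
  · intro τ hτ
    rw [map_sum]
    refine Finset.sum_eq_zero fun j _ => ?_
    rw [map_sub, hτ, sub_self]
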